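/- arXiv:0810.1305 — 8 statements merged into one kernel-verified Lean document; each statement's English description precedes it below -/
import Mathlib

section
/- Every associative po-groupoid satisfies the identity x · y · x = y · x. -/
/-- Every associative po-groupoid satisfies `x·y·x = y·x`. -/
theorem stmt_3 {A : Type*} (m : A → A → A)
    (hassoc : ∀ x y z, m (m x y) z = m x (m y z))
    (hrefl : ∀ x : A, m x x = x)
    (hanti : ∀ x y : A, m x y = x → m y x = y → x = y)
    (htrans : ∀ x y z : A, m x y = x → m y z = y → m x z = x) :
    ∀ x y : A, m (m x y) x = m y x := by
  intro x y
  have h1 : m (m y x) (m y x) = m y x := hrefl (m y x)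
  have h1' : m y (m x (m y x)) = m y x := by rw [← hassoc, h1]
  apply hanti
  · -- m (m (m x y) x) (m y x) = m (m x y) x
    calc m (m (m x y) x) (m y x) = m x (m y (m x (m y x))) := by
          simp only [hassoc]
      _ = m (m x y) x := by rw [h1', ← hassoc]
  · -- m (m y x) (m (m x y) x) = m y x
    calc m (m y x) (m (m x y) x) = m y (m (m x x) (m y x)) := by
          simp only [hassoc]
      _ = m y x := by rw [hrefl, ← hassoc, h1]
end

section
/- Let A be an associative po-groupoid. Then A satisfies the identity x·y·z = y·x·z for all x, y, z if and only if whenever x ⪯ z and y ⪯ z, x·y = y·x (i.e., elements with a common upper bound commute). -/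
/-- In an associative po-groupoid, the identity `x·y·z = y·x·z` holds iff
any two elements with a common upper bound commute. -/
theorem stmt_5 {A : Type*} (m : A → A → A)
    (hassoc : ∀ x y z, m (m x y) z = m x (m y z))
    (hrefl : ∀ x : A, m x x = x)
    (hanti : ∀ x y : A, m x y = x → m y x = y → x = y)
    (htrans : ∀ x y z : A, m x y = x → m y z = y → m x z = x) :
    (∀ x y z : A, m (m x y) z = m (m y x) z) ↔
    (∀ x y z : A, m x z = x → m y z = y → m x y = m y x) := by
  constructor
  · intro hid x y z hx hy
    calc m x y = m x (m y z) := by rw [hy]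
      _ = m (m x y) z := (hassoc x y z).symm
      _ = m (m y x) z := hid x y z
      _ = m y (m x z) := hassoc y x z
      _ = m y x := by rw [hx]
  · intro hcom x y z
    -- every element of the form w·z is ≤ z
    have hle : ∀ w : A, m (m w z) z = m w z := by
      intro w; rw [hassoc, hrefl]
    -- z·(w·z) = w·z
    have hzid : ∀ w : A, m z (m w z) = m w z := by
      intro w
      have h := hcom z (m w z) z (hrefl z) (hle w)
      rw [h, hle]
    -- (x·z)·(y·z) = (y·z)·(x·z)
    have hswap : ∀ u v : A, m (m u z) (m v z) = m (m v z) (m u z) :=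
      fun u v => hcom (m u z) (m v z) z (hle u) (hle v)
    calc m (m x y) z = m x (m y z) := hassoc x y z
      _ = m x (m z (m y z)) := by rw [hzid]
      _ = m x (m (m z y) z) := by rw [hassoc z y z]
      _ = m (m x (m z y)) z := (hassoc _ _ _).symm
      _ = m (m (m x z) y) z := by rw [hassoc x z y]
      _ = m (m x z) (m y z) := hassoc _ _ _
      _ = m (m y z) (m x z) := hswap x y
      _ = m (m (m y z) x) z := (hassoc _ _ _).symm
      _ = m (m y (m z x)) z := by rw [hassoc y z x]
      _ = m y (m (m z x) z) := hassoc _ _ _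
      _ = m y (m z (m x z)) := by rw [hassoc z x z]
      _ = m y (m x z) := by rw [hzid]
      _ = m (m y x) z := (hassoc y x z).symm
end

section
/- Let A be an associative po-groupoid satisfying x·y·z = y·x·z. If m₁ ⪯ m₂ ⪰ m₃ ⪯ m₄ ⪰ ... ⪯ m_{2n-2} ⪰ m_{2n-1} is a zig-zag chain in A, then m₁·m₃·…·m_{2n-1} = m_{2n-1}·…·m₃·m₁. -/
private def Lp {A : Type*} (m : A → A → A) (f : ℕ → A) : ℕ → A
  | 0 => f 1
  | k + 1 => m (Lp m f k) (f (2 * k + 3))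

private def Sp {A : Type*} (m : A → A → A) (f : ℕ → A) : ℕ → A
  | 0 => f 1
  | k + 1 => m (f (2 * k + 3)) (Sp m f k)

private theorem foldl_assoc' {A : Type*} (m : A → A → A)
    (hassoc : ∀ x y z, m (m x y) z = m x (m y z)) :
    ∀ (l : List A) (a b : A), l.foldl m (m a b) = m a (l.foldl m b)
  | [], a, b => rfl
  | c :: l, a, b => by
      simp only [List.foldl_cons, hassoc]
      exact foldl_assoc' m hassoc l a (m b c)

private theorem Lp_eq {A : Type*} (m : A → A → A) (f : ℕ → A) :
    ∀ k, ((List.range k).map (fun j => f (2 * j + 3))).foldl m (f 1) = Lp m f k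
  | 0 => rfl
  | k + 1 => by
      rw [List.range_succ, List.map_append, List.foldl_append, Lp_eq m f k]
      rfl

private theorem Sp_eq {A : Type*} (m : A → A → A)
    (hassoc : ∀ x y z, m (m x y) z = m x (m y z)) (f : ℕ → A) :
    ∀ k, (((List.range k).map (fun j => f (2 * j + 1))).reverse).foldl m (f (2 * k + 1))
      = Sp m f k
  | 0 => rfl
  | k + 1 => by
      rw [List.range_succ, List.map_append, List.reverse_append]
      simp only [List.map_cons, List.map_nil, List.reverse_cons, List.reverse_nil,
        List.nil_append, List.cons_append, List.foldl_cons]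
      rw [foldl_assoc' m hassoc, Sp_eq m hassoc f k]
      show m (f (2 * (k + 1) + 1)) (Sp m f k) = Sp m f (k + 1)
      have : 2 * (k + 1) + 1 = 2 * k + 3 := by ring
      rw [this]
      rfl

/-- two elements with a common upper bound commute -/
private theorem comm_of_bound {A : Type*} (m : A → A → A)
    (hassoc : ∀ x y z, m (m x y) z = m x (m y z))
    (hmed : ∀ x y z, m (m x y) z = m (m y x) z)
    {a b c : A} (ha : m a c = a) (hb : m b c = b) : m a b = m b a := by
  calc m a b = m a (m b c) := by rw [hb]
    _ = m (m a b) c := (hassoc _ _ _).symm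
    _ = m (m b a) c := hmed _ _ _
    _ = m b (m a c) := hassoc _ _ _
    _ = m b a := by rw [ha]

/-- `Lp k ⪯ f (2k+2)`, only needs the chain condition at `i = k+1`. -/
private theorem Lp_bound {A : Type*} (m : A → A → A)
    (hassoc : ∀ x y z, m (m x y) z = m x (m y z)) (f : ℕ → A)
    (k : ℕ) (h : m (f (2 * (k + 1) - 1)) (f (2 * (k + 1))) = f (2 * (k + 1) - 1)) :
    m (Lp m f k) (f (2 * k + 2)) = Lp m f k := by
  have h2 : (2 * (k + 1) - 1) = 2 * k + 1 := by omega
  have h3 : (2 * (k + 1)) = 2 * k + 2 := by ring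
  rw [h2, h3] at h
  cases k with
  | zero => exact h
  | succ j =>
      show m (m (Lp m f j) (f (2 * j + 3))) (f (2 * (j + 1) + 2)) = m (Lp m f j) (f (2 * j + 3))
      rw [hassoc]
      have : 2 * (j + 1) + 1 = 2 * j + 3 := by ring
      rw [this] at h
      have : 2 * (j + 1) + 2 = 2 * (j + 1) + 2 := rfl
      rw [show (2 * (j + 1) + 2 : ℕ) = 2 * (j + 1) + 2 from rfl, h]

private theorem Lp_eq_Sp {A : Type*} (m : A → A → A)
    (hassoc : ∀ x y z, m (m x y) z = m x (m y z))
    (hmed : ∀ x y z, m (m x y) z = m (m y x) z) (f : ℕ → A) :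
    ∀ k, (∀ i, 1 ≤ i → i ≤ k →
      m (f (2 * i - 1)) (f (2 * i)) = f (2 * i - 1) ∧
      m (f (2 * i + 1)) (f (2 * i)) = f (2 * i + 1)) →
    Lp m f k = Sp m f k
  | 0, _ => rfl
  | k + 1, hch => by
      have ih := Lp_eq_Sp m hassoc hmed f k (fun i h1 h2 => hch i h1 (by omega))
      have hck := hch (k + 1) (by omega) le_rfl
      -- Sp k ⪯ f (2k+2)
      have hS : m (Sp m f k) (f (2 * k + 2)) = Sp m f k := by
        rw [← ih]; exact Lp_bound m hassoc f k hck.1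
      -- f (2k+3) ⪯ f (2k+2)
      have hf : m (f (2 * k + 3)) (f (2 * k + 2)) = f (2 * k + 3) := by
        have := hck.2
        rwa [show 2 * (k + 1) + 1 = 2 * k + 3 from by ring,
          show 2 * (k + 1) = 2 * k + 2 from by ring] at this
      show m (Lp m f k) (f (2 * k + 3)) = m (f (2 * k + 3)) (Sp m f k)
      rw [ih]
      exact comm_of_bound m hassoc hmed hS hf

/-- If `m₁ ⪯ m₂ ⪰ m₃ ⪯ … ⪰ m_{2n-1}` is a zig-zag chain, then the
left-associated product `m₁·m₃·…·m_{2n-1}` equals `m_{2n-1}·…·m₃·m₁`. -/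
theorem stmt_6 {A : Type*} (m : A → A → A)
    (hassoc : ∀ x y z, m (m x y) z = m x (m y z))
    (hrefl : ∀ x : A, m x x = x)
    (hanti : ∀ x y : A, m x y = x → m y x = y → x = y)
    (htrans : ∀ x y z : A, m x y = x → m y z = y → m x z = x)
    (hmed : ∀ x y z : A, m (m x y) z = m (m y x) z)
    (n : ℕ) (hn : 1 ≤ n) (f : ℕ → A)
    (hchain : ∀ i, 1 ≤ i → i ≤ n - 1 →
      m (f (2 * i - 1)) (f (2 * i)) = f (2 * i - 1) ∧
      m (f (2 * i + 1)) (f (2 * i)) = f (2 * i + 1)) :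
    ((List.range (n - 1)).map (fun k => f (2 * k + 3))).foldl m (f 1) =
    (((List.range (n - 1)).map (fun k => f (2 * k + 1))).reverse).foldl m
      (f (2 * n - 1)) := by
  have h1 : 2 * n - 1 = 2 * (n - 1) + 1 := by omega
  rw [h1, Lp_eq m f (n - 1), Sp_eq m hassoc f (n - 1)]
  exact Lp_eq_Sp m hassoc hmed f (n - 1) hchain
end

section
/- Let A be an associative po-groupoid satisfying x·y·z = y·x·z whose associated order is connected. Then any two elements x₁, x₂ of A have a common lower bound in the following sense: there exists u with u·x₁ = u·x₂, and moreover u can be chosen so that u·x₁ = u (i.e., u ⪯ x₁ and u ⪯ x₂). -/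
/-- In a connected associative po-groupoid satisfying `x·y·z = y·x·z`,
any two elements have a common lower bound `u`: `u·x₁ = u·x₂` and `u·x₁ = u`. -/
theorem stmt_7 {A : Type*} (m : A → A → A)
    (hassoc : ∀ x y z, m (m x y) z = m x (m y z))
    (hrefl : ∀ x : A, m x x = x)
    (hanti : ∀ x y : A, m x y = x → m y x = y → x = y)
    (htrans : ∀ x y z : A, m x y = x → m y z = y → m x z = x)
    (hmed : ∀ x y z : A, m (m x y) z = m (m y x) z)
    (hconn : ∀ x y : A, ∃ n : ℕ, 1 ≤ n ∧ ∃ f : ℕ → A,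
      m (f 1) x = f 1 ∧ m (f (2 * n - 1)) y = f (2 * n - 1) ∧
      ∀ i, 1 ≤ i → i ≤ n - 1 →
        m (f (2 * i - 1)) (f (2 * i)) = f (2 * i - 1) ∧
        m (f (2 * i + 1)) (f (2 * i)) = f (2 * i + 1)) :
    ∀ x₁ x₂ : A, ∃ u : A, m u x₁ = m u x₂ ∧ m u x₁ = u := by
  intro x₁ x₂
  obtain ⟨n, hn, f, h1, h2, hpairs⟩ := hconn x₁ x₂
  -- `a·b ⪯ b` always
  have L1 : ∀ a b, m (m a b) b = m a b := fun a b => by rw [hassoc, hrefl]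
  -- elements below a common upper bound commute
  have comm : ∀ a b c, m a c = a → m b c = b → m a b = m b a := by
    intro a b c ha hb
    calc m a b = m a (m b c) := by rw [hb]
      _ = m (m a b) c := (hassoc ..).symm
      _ = m (m b a) c := hmed ..
      _ = m b (m a c) := hassoc ..
      _ = m b a := by rw [ha]
  have key : ∀ k, 1 ≤ k → k ≤ n →
      ∃ u, m u (f 1) = u ∧ m u (f (2 * k - 1)) = u := by
    intro k hk1 hk2
    induction k, hk1 using Nat.le_induction with
    | base => exact ⟨f 1, hrefl _, by norm_num [hrefl]⟩
    | succ k hk ih =>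
      obtain ⟨u, hu1, hu2⟩ := ih (by omega)
      obtain ⟨hp1, hp2⟩ := hpairs k hk (by omega)
      -- u ⪯ f (2k)
      have hu3 : m u (f (2 * k)) = u := htrans _ _ _ hu2 hp1
      set v := m u (f (2 * k + 1)) with hv
      have hvc : v = m (f (2 * k + 1)) u := comm _ _ _ hu3 hp2
      have hvu : m v u = v := by rw [hvc, L1]
      have e : 2 * (k + 1) - 1 = 2 * k + 1 := by omega
      rw [e]
      exact ⟨v, htrans _ _ _ hvu hu1, L1 _ _⟩
  obtain ⟨u, hu1, hu2⟩ := key n hn le_rfl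
  have ha : m u x₁ = u := htrans _ _ _ hu1 h1
  have hb : m u x₂ = u := htrans _ _ _ hu2 h2
  exact ⟨u, by rw [ha, hb], ha⟩
end

section
/- Let A be an associative po-groupoid satisfying x·y·z = y·x·z with connected order. Then for any finite list x₁,…,x_j of elements of A there exists u with u·x₁ = u·x_i for all i = 2,…,j. -/
lemma chain_aux {A : Type*} (m : A → A → A)
    (hassoc : ∀ x y z, m (m x y) z = m x (m y z))
    (hmed : ∀ x y z, m (m x y) z = m (m y x) z) :
    ∀ (n : ℕ), 1 ≤ n → ∀ (x y : A) (f : ℕ → A),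
      m (f 1) x = f 1 → m (f (2 * n - 1)) y = f (2 * n - 1) →
      (∀ i, 1 ≤ i → i ≤ n - 1 →
        m (f (2 * i - 1)) (f (2 * i)) = f (2 * i - 1) ∧
        m (f (2 * i + 1)) (f (2 * i)) = f (2 * i + 1)) →
      ∃ u : A, m u x = m u y := by
  intro n
  induction n with
  | zero => omega
  | succ k ih =>
    intro _ x y f h1 h2 hmid
    rcases Nat.eq_zero_or_pos k with hk | hk
    · subst hk
      refine ⟨f 1, ?_⟩
      simpa using h1.trans h2.symm
    · -- k ≥ 1; apply ih to the shifted chain g i = f (i+2), from (f 2) to y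
      obtain ⟨v, hv⟩ := ih hk (f 2) y (fun i => f (i + 2))
        (by simpa using (hmid 1 le_rfl (by omega)).2)
        (by
          have : 2 * k - 1 + 2 = 2 * (k + 1) - 1 := by omega
          simpa [this] using h2)
        (by
          intro i hi1 hi2
          have e1 : 2 * i - 1 + 2 = 2 * (i + 1) - 1 := by omega
          have e2 : 2 * i + 2 = 2 * (i + 1) := by omega
          have e3 : 2 * i + 1 + 2 = 2 * (i + 1) + 1 := by omega
          have h := hmid (i + 1) (by omega) (by omega)
          constructor
          · simpa [e1, e2] using h.1
          · simpa [e3, e2] using h.2)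
      refine ⟨m v (f 1), ?_⟩
      have hf12 : m (f 1) (f 2) = f 1 := (hmid 1 le_rfl (by omega)).1
      calc m (m v (f 1)) x = m v (m (f 1) x) := hassoc _ _ _
        _ = m v (f 1) := by rw [h1]
        _ = m v (m (f 1) (f 2)) := by rw [hf12]
        _ = m (m v (f 1)) (f 2) := (hassoc _ _ _).symm
        _ = m (m (f 1) v) (f 2) := hmed _ _ _
        _ = m (f 1) (m v (f 2)) := hassoc _ _ _
        _ = m (f 1) (m v y) := by rw [hv]
        _ = m (m (f 1) v) y := (hassoc _ _ _).symm
        _ = m (m v (f 1)) y := hmed _ _ _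

/-- In a connected associative po-groupoid satisfying `x·y·z = y·x·z`,
for any finite list `x₁, …, x_j` there is `u` with `u·x₁ = u·x_i` for all `i`. -/
theorem stmt_8 {A : Type*} (m : A → A → A)
    (hassoc : ∀ x y z, m (m x y) z = m x (m y z))
    (hrefl : ∀ x : A, m x x = x)
    (hanti : ∀ x y : A, m x y = x → m y x = y → x = y)
    (htrans : ∀ x y z : A, m x y = x → m y z = y → m x z = x)
    (hmed : ∀ x y z : A, m (m x y) z = m (m y x) z)
    (hconn : ∀ x y : A, ∃ n : ℕ, 1 ≤ n ∧ ∃ f : ℕ → A,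
      m (f 1) x = f 1 ∧ m (f (2 * n - 1)) y = f (2 * n - 1) ∧
      ∀ i, 1 ≤ i → i ≤ n - 1 →
        m (f (2 * i - 1)) (f (2 * i)) = f (2 * i - 1) ∧
        m (f (2 * i + 1)) (f (2 * i)) = f (2 * i + 1)) :
    ∀ (j : ℕ) (x : Fin (j + 1) → A), ∃ u : A, ∀ i : Fin (j + 1),
      m u (x 0) = m u (x i) := by
  have pair : ∀ x y : A, ∃ u : A, m u x = m u y := by
    intro x y
    obtain ⟨n, hn, f, h1, h2, hmid⟩ := hconn x y
    exact chain_aux m hassoc hmed n hn x y f h1 h2 hmid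
  intro j
  induction j with
  | zero =>
    intro x
    refine ⟨x 0, fun i => ?_⟩
    have : i = 0 := Fin.fin_one_eq_zero i
    rw [this]
  | succ j ih =>
    intro x
    obtain ⟨u, hu⟩ := ih (fun i => x i.castSucc)
    obtain ⟨v, hv⟩ := pair (x 0) (x (Fin.last (j + 1)))
    refine ⟨m u v, fun i => ?_⟩
    induction i using Fin.lastCases with
    | last =>
       calc m (m u v) (x 0) = m u (m v (x 0)) := hassoc _ _ _
        _ = m u (m v (x (Fin.last (j+1)))) := by rw [hv]
        _ = m (m u v) (x (Fin.last (j+1))) := (hassoc _ _ _).symm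
    | cast i' =>
      have h0 : (0 : Fin (j + 2)) = (0 : Fin (j + 1)).castSucc := rfl
      calc m (m u v) (x 0) = m (m v u) (x 0) := hmed _ _ _
        _ = m v (m u (x 0)) := hassoc _ _ _
        _ = m v (m u (x i'.castSucc)) := by rw [h0, hu 0, hu i']
        _ = m (m v u) (x i'.castSucc) := (hassoc _ _ _).symm
        _ = m (m u v) (x i'.castSucc) := hmed _ _ _
end

section
/- In an associative po-groupoid satisfying x·y·z = y·x·z, if m₁ ⪯ m₂, m₃ ⪯ m₂, m₃ ⪯ m₄, m₅ ⪯ m₄, and x ⪰ m₁, y ⪰ m₅ (zig-zag of length 2 connecting x and y), then u := m₁·m₃·m₅ satisfies u·x = u·y. -/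
/-- Zig-zag of length 2 connecting `x` and `y`: with `u := m₁·m₃·m₅`,
`u·x = u·y`. -/
theorem stmt_9 {A : Type*} (m : A → A → A)
    (hassoc : ∀ x y z, m (m x y) z = m x (m y z))
    (hrefl : ∀ x : A, m x x = x)
    (hanti : ∀ x y : A, m x y = x → m y x = y → x = y)
    (htrans : ∀ x y z : A, m x y = x → m y z = y → m x z = x)
    (hmed : ∀ x y z : A, m (m x y) z = m (m y x) z)
    (m₁ m₂ m₃ m₄ m₅ x y : A)
    (h12 : m m₁ m₂ = m₁) (h32 : m m₃ m₂ = m₃)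
    (h34 : m m₃ m₄ = m₃) (h54 : m m₅ m₄ = m₅)
    (h1x : m m₁ x = m₁) (h5y : m m₅ y = m₅) :
    m (m (m m₁ m₃) m₅) x = m (m (m m₁ m₃) m₅) y := by
  -- elements with a common upper bound commute
  have comm : ∀ a b c : A, m a c = a → m b c = b → m a b = m b a := by
    intro a b c hac hbc
    have h := hmed a b c
    rw [hassoc a b c, hassoc b a c, hbc, hac] at h
    exact h
  have c13 : m m₁ m₃ = m m₃ m₁ := comm m₁ m₃ m₂ h12 h32
  have c35 : m m₃ m₅ = m m₅ m₃ := comm m₃ m₅ m₄ h34 h54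
  calc m (m (m m₁ m₃) m₅) x
      = m (m m₁ m₃) (m m₅ x) := hassoc _ _ _
    _ = m (m m₃ m₁) (m m₅ x) := by rw [c13]
    _ = m m₃ (m m₁ (m m₅ x)) := hassoc _ _ _
    _ = m m₃ (m (m m₁ m₅) x) := by rw [hassoc]
    _ = m m₃ (m (m m₅ m₁) x) := by rw [hmed m₁ m₅ x]
    _ = m m₃ (m m₅ (m m₁ x)) := by rw [hassoc]
    _ = m m₃ (m m₅ m₁) := by rw [h1x]
    _ = m (m m₃ m₅) m₁ := (hassoc _ _ _).symm
    _ = m (m m₅ m₃) m₁ := by rw [c35]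
    _ = m m₅ (m m₃ m₁) := hassoc _ _ _
    _ = m m₅ (m m₁ m₃) := by rw [c13]
    _ = m (m m₅ m₁) m₃ := (hassoc _ _ _).symm
    _ = m (m m₁ m₅) m₃ := by rw [hmed m₁ m₅ m₃]
    _ = m m₁ (m m₅ m₃) := hassoc _ _ _
    _ = m m₁ (m m₃ m₅) := by rw [c35]
    _ = m (m m₁ m₃) m₅ := (hassoc _ _ _).symm
    _ = m (m m₁ m₃) (m m₅ y) := by rw [h5y]
    _ = m (m (m m₁ m₃) m₅) y := (hassoc _ _ _).symm
end

section
/- In any associative po-groupoid, for all x, y: y·x ⪯ x·y·x and x·y·x ⪯ y·x, where a ⪯ b means a·b = a; hence the two elements are equal. -/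
/-- In an associative po-groupoid, `y·x ⪯ x·y·x` and `x·y·x ⪯ y·x`,
hence `x·y·x = y·x`. -/
theorem stmt_11 {A : Type*} (m : A → A → A)
    (hassoc : ∀ x y z, m (m x y) z = m x (m y z))
    (hrefl : ∀ x : A, m x x = x)
    (hanti : ∀ x y : A, m x y = x → m y x = y → x = y)
    (htrans : ∀ x y z : A, m x y = x → m y z = y → m x z = x) :
    ∀ x y : A,
      m (m y x) (m (m x y) x) = m y x ∧
      m (m (m x y) x) (m y x) = m (m x y) x ∧
      m (m x y) x = m y x := by
  intro x y
  have key : m y (m x (m y x)) = m y x := by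
    have := hrefl (m y x)
    rwa [hassoc] at this
  have h1 : m (m y x) (m (m x y) x) = m y x := by
    simp only [hassoc]
    rw [← hassoc x x, hrefl x, key]
  have h2 : m (m (m x y) x) (m y x) = m (m x y) x := by
    simp only [hassoc]
    rw [key]
  exact ⟨h1, h2, (hanti _ _ h1 h2).symm⟩
end

section
/- In an associative po-groupoid satisfying x·y·z = y·x·z, if m₁ ⪯ m₂ and m₃ ⪯ m₂ then m₁·m₃ = m₃·m₁, and moreover m₁·m₃ is a lower bound of both m₁ and m₃ (i.e., (m₁·m₃)·m₁ = m₁·m₃ and (m₁·m₃)·m₃ = m₁·m₃). -/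
/-- If `m₁ ⪯ m₂` and `m₃ ⪯ m₂`, then `m₁·m₃ = m₃·m₁` and `m₁·m₃` is a
lower bound of both `m₁` and `m₃`. -/
theorem stmt_17 {A : Type*} (m : A → A → A)
    (hassoc : ∀ x y z, m (m x y) z = m x (m y z))
    (hrefl : ∀ x : A, m x x = x)
    (hanti : ∀ x y : A, m x y = x → m y x = y → x = y)
    (htrans : ∀ x y z : A, m x y = x → m y z = y → m x z = x)
    (hmed : ∀ x y z : A, m (m x y) z = m (m y x) z)
    (m₁ m₂ m₃ : A) (h12 : m m₁ m₂ = m₁) (h32 : m m₃ m₂ = m₃) :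
    m m₁ m₃ = m m₃ m₁ ∧ m (m m₁ m₃) m₁ = m m₁ m₃ ∧ m (m m₁ m₃) m₃ = m m₁ m₃ := by
  have hcomm : m m₃ m₁ = m m₁ m₃ := by
    calc m m₃ m₁ = m m₃ (m m₁ m₂) := by rw [h12]
      _ = m (m m₃ m₁) m₂ := (hassoc m₃ m₁ m₂).symm
      _ = m (m m₁ m₃) m₂ := (hmed m₁ m₃ m₂).symm
      _ = m m₁ (m m₃ m₂) := hassoc m₁ m₃ m₂
      _ = m m₁ m₃ := by rw [h32]
  refine ⟨hcomm.symm, ?_, ?_⟩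
  · calc m (m m₁ m₃) m₁ = m (m m₃ m₁) m₁ := hmed m₁ m₃ m₁
      _ = m m₃ (m m₁ m₁) := hassoc m₃ m₁ m₁
      _ = m m₃ m₁ := by rw [hrefl]
      _ = m m₁ m₃ := hcomm
  · calc m (m m₁ m₃) m₃ = m m₁ (m m₃ m₃) := hassoc m₁ m₃ m₃
      _ = m m₁ m₃ := by rw [hrefl]
end
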